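/- arXiv:0803.1856 — 6 statements merged into one kernel-verified Lean document; each statement's English description precedes it below -/
import Mathlib

section
/- Let $(\Omega, \mu)$ be a standard probability space, $L:\Omega\to\Omega$ an ergodic measure-preserving transformation, $f:\Omega\to\mathbf{R}$ measurable, and $S_n = \sum_{k=0}^{n-1} f\circ L^k$. Let $D:\mathbf{R}_+\to\mathbf{R}_+$ be a concave function with $\lim_{t\to\infty} D(t)/t = 0$. If $D(|f|)$ is integrable, then $\lim_{n\to\infty} \frac{1}{n} D(|S_n|) = 0$ almost surely. -/
/-!
Split `f` at a level `c`: `|S_n| ≤ c n + ∑_{k<n} |f ∘ L^k| 1_{|f ∘ L^k| > c}`. Since `D` is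
concave and nonnegative on `[0, ∞)`, it is nondecreasing and `D - D 0` is subadditive there, so
`D |S_n| ≤ D (c n) + ∑_{k<n} φ_c ∘ L^k` with `φ_c = (D |f| - D 0) 1_{|f| > c}`. The first term is
`o(n)` because `D t = o(t)`. By dominated convergence `∫ φ_c → 0`, and Hopf's maximal ergodic
inequality `μ {∃ n, ε n < ∑_{k<n} φ ∘ L^k} ≤ ∫ φ / ε` then shows that almost surely, for every
`ε > 0`, some `c` has `∑_{k<n} φ_c ∘ L^k ≤ ε n` for all `n`.
-/

open MeasureTheory Filter Topology Set

namespace ConcaveOn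

variable {D : ℝ → ℝ}

lemma monotoneOn_Ici_of_forall_le {c m : ℝ} (hD : ConcaveOn ℝ (Ici c) D)
    (hm : ∀ t ∈ Ici c, m ≤ D t) : MonotoneOn D (Ici c) := by
  intro a ha b hb hab
  rcases hab.eq_or_lt with rfl | hab
  · rfl
  by_contra! hba
  set s := (D a - D b) / (b - a)
  have hs : 0 < s := div_pos (by linarith) (by linarith)
  -- the secant slope `-s < 0` beyond `b` pushes `D` below `m` at this `x`
  set x := b + (D b - m + 1) / s
  have hbx : 0 < x - b := by simpa [x] using div_pos (by linarith [hm b hb]) hs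
  have hx : x ∈ Ici c := mem_Ici.2 (by linarith [mem_Ici.1 hb])
  have hslope : (D x - D b) / (x - b) ≤ -s := by
    have h := hD.slope_anti_adjacent ha hx hab (by linarith : b < x)
    rwa [← neg_sub (D a), neg_div] at h
  have hdrop : s * (x - b) = D b - m + 1 := by simp only [x]; field_simp; ring
  have := (div_le_iff₀ hbx).1 hslope
  linarith [hm x hx]

lemma map_add_add_map_zero_le (hD : ConcaveOn ℝ (Ici 0) D) {x y : ℝ} (hx : 0 ≤ x) (hy : 0 ≤ y) :
    D (x + y) + D 0 ≤ D x + D y := by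
  rcases (add_nonneg hx hy).eq_or_lt with hxy | hxy
  · obtain ⟨rfl, rfl⟩ : x = 0 ∧ y = 0 := ⟨by linarith, by linarith⟩
    simp
  have hmem : x + y ∈ Ici (0 : ℝ) := hxy.le
  have convex_at (u v : ℝ) (hu : 0 ≤ u) (hv : 0 ≤ v) (huv : u + v = x + y) :
      v / (x + y) * D 0 + u / (x + y) * D (x + y) ≤ D u := by
    have h := hD.2 (mem_Ici.2 le_rfl) hmem (div_nonneg hv hxy.le) (div_nonneg hu hxy.le)
      (by field_simp; linarith)
    have hpt : v / (x + y) * 0 + u / (x + y) * (x + y) = u := by field_simp; ring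
    simpa only [smul_eq_mul, hpt] using h
  have hsum : y / (x + y) * D 0 + x / (x + y) * D (x + y)
      + (x / (x + y) * D 0 + y / (x + y) * D (x + y)) = D 0 + D (x + y) := by
    field_simp; ring
  linarith [convex_at x y hx hy rfl, convex_at y x hy hx (add_comm y x)]

lemma map_add_sum_le_add_sum_sub_map_zero (hD : ConcaveOn ℝ (Ici 0) D) {a : ℝ} (ha : 0 ≤ a)
    {g : ℕ → ℝ} (hg : ∀ k, 0 ≤ g k) (n : ℕ) :
    D (a + ∑ k ∈ Finset.range n, g k) ≤ D a + ∑ k ∈ Finset.range n, (D (g k) - D 0) := by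
  induction n with
  | zero => simp
  | succ n ih =>
    have hsplit := hD.map_add_add_map_zero_le
      (add_nonneg ha (Finset.sum_nonneg (s := Finset.range n) fun k _ => hg k)) (hg n)
    rw [Finset.sum_range_succ, Finset.sum_range_succ, ← add_assoc]
    linarith

end ConcaveOn

noncomputable def tailExcess (D : ℝ → ℝ) (c t : ℝ) : ℝ :=
  if c < |t| then D |t| - D 0 else 0

section TailExcess

variable {D : ℝ → ℝ}

lemma tailExcess_nonneg (hmono : MonotoneOn D (Ici 0)) (c t : ℝ) : 0 ≤ tailExcess D c t := by
  unfold tailExcess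
  split_ifs
  · exact sub_nonneg.2 (hmono (mem_Ici.2 le_rfl) (mem_Ici.2 (abs_nonneg t)) (abs_nonneg t))
  · rfl

lemma tailExcess_le {t : ℝ} (hD0 : 0 ≤ D 0) (hDabs : 0 ≤ D |t|) (c : ℝ) :
    tailExcess D c t ≤ D |t| := by
  unfold tailExcess
  split_ifs <;> linarith

lemma tailExcess_eq_zero_of_abs_le {c t : ℝ} (h : |t| ≤ c) : tailExcess D c t = 0 :=
  if_neg h.not_gt

lemma map_abs_sum_le_add_sum_tailExcess (hD : ConcaveOn ℝ (Ici 0) D)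
    (hmono : MonotoneOn D (Ici 0)) {c : ℝ} (hc : 0 ≤ c) (x : ℕ → ℝ) (n : ℕ) :
    D |∑ k ∈ Finset.range n, x k| ≤ D (c * n) + ∑ k ∈ Finset.range n, tailExcess D c (x k) := by
  set tail : ℕ → ℝ := fun k => if c < |x k| then |x k| else 0
  have htail : ∀ k, 0 ≤ tail k := fun k => by
    simp only [tail]; split_ifs <;> simp
  have hsplit : |∑ k ∈ Finset.range n, x k| ≤ c * n + ∑ k ∈ Finset.range n, tail k := by
    calc |∑ k ∈ Finset.range n, x k| ≤ ∑ k ∈ Finset.range n, |x k| :=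
          Finset.abs_sum_le_sum_abs _ _
      _ ≤ ∑ k ∈ Finset.range n, (c + tail k) := Finset.sum_le_sum fun k _ => by
          simp only [tail]
          split_ifs with h
          · linarith
          · linarith [not_lt.1 h]
      _ = c * n + ∑ k ∈ Finset.range n, tail k := by
          rw [Finset.sum_add_distrib, Finset.sum_const, Finset.card_range, nsmul_eq_mul, mul_comm]
  have htail_excess : ∀ k, D (tail k) - D 0 = tailExcess D c (x k) := fun k => by
    simp only [tail, tailExcess]; split_ifs <;> simp
  calc D |∑ k ∈ Finset.range n, x k|
      ≤ D (c * n + ∑ k ∈ Finset.range n, tail k) :=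
        hmono (mem_Ici.2 (abs_nonneg _)) (mem_Ici.2 ((abs_nonneg _).trans hsplit)) hsplit
    _ ≤ D (c * n) + ∑ k ∈ Finset.range n, (D (tail k) - D 0) :=
        hD.map_add_sum_le_add_sum_sub_map_zero (by positivity) htail n
    _ = D (c * n) + ∑ k ∈ Finset.range n, tailExcess D c (x k) := by simp only [htail_excess]

lemma measurable_tailExcess (hmono : MonotoneOn D (Ici 0)) (c : ℝ) :
    Measurable (tailExcess D c) := by
  have hext : Monotone fun t => D (max t 0) := fun s t hst =>
    hmono (mem_Ici.2 (le_max_right _ _)) (mem_Ici.2 (le_max_right _ _)) (max_le_max hst le_rfl)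
  have hDabs : Measurable fun t => D |t| := by
    convert hext.measurable.comp measurable_abs using 2 with t
    simp
  exact Measurable.ite (measurableSet_lt measurable_const measurable_abs)
    (hDabs.sub_const _) measurable_const

lemma norm_tailExcess_le (hmono : MonotoneOn D (Ici 0))
    (hDnonneg : ∀ t ∈ Ici (0 : ℝ), 0 ≤ D t) (c t : ℝ) : ‖tailExcess D c t‖ ≤ D |t| := by
  rw [Real.norm_of_nonneg (tailExcess_nonneg hmono c t)]
  exact tailExcess_le (hDnonneg 0 (mem_Ici.2 le_rfl)) (hDnonneg _ (mem_Ici.2 (abs_nonneg t))) c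

end TailExcess

section Growth

variable {D : ℝ → ℝ}

lemma tendsto_map_mul_natCast_div (hDslope : Tendsto (fun t => D t / t) atTop (𝓝 0))
    {c : ℝ} (hc : 0 ≤ c) : Tendsto (fun n : ℕ => D (c * n) / n) atTop (𝓝 0) := by
  rcases hc.eq_or_lt with rfl | hc
  · simpa using tendsto_const_div_atTop_nhds_zero_nat (D 0)
  have hscaled : Tendsto (fun n : ℕ => c * (D (c * n) / (c * n))) atTop (𝓝 0) := by
    simpa using (hDslope.comp
      (tendsto_natCast_atTop_atTop.const_mul_atTop hc)).const_mul c
  refine hscaled.congr' ?_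
  filter_upwards [eventually_ne_atTop 0] with n hn
  field_simp

lemma tendsto_map_abs_sum_div_of_forall_exists_sum_tailExcess_le
    (hD : ConcaveOn ℝ (Ici 0) D) (hDnonneg : ∀ t ∈ Ici (0 : ℝ), 0 ≤ D t)
    (hDslope : Tendsto (fun t => D t / t) atTop (𝓝 0)) (x : ℕ → ℝ)
    (hx : ∀ ε > 0, ∃ M : ℕ, ∀ n, ∑ k ∈ Finset.range n, tailExcess D M (x k) ≤ ε * n) :
    Tendsto (fun n : ℕ => D |∑ k ∈ Finset.range n, x k| / n) atTop (𝓝 0) := by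
  have hmono := hD.monotoneOn_Ici_of_forall_le hDnonneg
  refine tendsto_order.2 ⟨fun a ha => Eventually.of_forall fun n =>
    ha.trans_le (div_nonneg (hDnonneg _ (mem_Ici.2 (abs_nonneg _))) n.cast_nonneg), fun a ha => ?_⟩
  obtain ⟨M, hM⟩ := hx (a / 2) (half_pos ha)
  filter_upwards [(tendsto_order.1 (tendsto_map_mul_natCast_div hDslope M.cast_nonneg)).2
    (a / 2) (half_pos ha), eventually_ne_atTop 0] with n hsmall hn
  have hn' : (0 : ℝ) < n := by positivity
  have hbound := (map_abs_sum_le_add_sum_tailExcess hD hmono M.cast_nonneg x n).trans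
    (add_le_add_right (hM n) _)
  calc D |∑ k ∈ Finset.range n, x k| / n ≤ (D (M * n) + a / 2 * n) / n := by gcongr
    _ = D (M * n) / n + a / 2 := by field_simp
    _ < a := by linarith

end Growth

/-- `birkhoffMax L ψ N ω = max_{0 ≤ n ≤ N} birkhoffSum L ψ n ω`, in recursive form. -/
noncomputable def birkhoffMax {Ω : Type*} (L : Ω → Ω) (ψ : Ω → ℝ) : ℕ → Ω → ℝ
  | 0 => fun _ => 0
  | N + 1 => fun ω => max 0 (ψ ω + birkhoffMax L ψ N (L ω))

namespace birkhoffMax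

variable {Ω : Type*} {L : Ω → Ω} {ψ : Ω → ℝ}

lemma nonneg : ∀ N ω, 0 ≤ birkhoffMax L ψ N ω
  | 0, _ => le_rfl
  | _ + 1, _ => le_max_left _ _

lemma le_succ : ∀ N ω, birkhoffMax L ψ N ω ≤ birkhoffMax L ψ (N + 1) ω
  | 0, ω => nonneg 1 ω
  | N + 1, ω => max_le_max le_rfl (add_le_add_right (le_succ N (L ω)) _)

lemma _root_.birkhoffSum_le_birkhoffMax : ∀ N ω, birkhoffSum L ψ N ω ≤ birkhoffMax L ψ N ω
  | 0, _ => by simp [birkhoffMax]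
  | N + 1, ω => by
    rw [birkhoffSum_succ']
    exact le_max_of_le_right (add_le_add_right (birkhoffSum_le_birkhoffMax N (L ω)) _)

lemma le_add_comp_of_pos {N : ℕ} {ω : Ω} (h : 0 < birkhoffMax L ψ N ω) :
    birkhoffMax L ψ N ω ≤ ψ ω + birkhoffMax L ψ N (L ω) := by
  cases N with
  | zero => exact absurd h (lt_irrefl 0)
  | succ N =>
    have hpos : 0 < ψ ω + birkhoffMax L ψ N (L ω) := by
      by_contra! hle
      exact h.not_ge (max_le le_rfl hle)
    calc birkhoffMax L ψ (N + 1) ω = ψ ω + birkhoffMax L ψ N (L ω) := max_eq_right hpos.le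
      _ ≤ ψ ω + birkhoffMax L ψ (N + 1) (L ω) := add_le_add_right (le_succ N (L ω)) _

variable [MeasurableSpace Ω]

lemma measurable (hL : Measurable L) (hψ : Measurable ψ) : ∀ N, Measurable (birkhoffMax L ψ N)
  | 0 => measurable_const
  | N + 1 => measurable_const.max (hψ.add ((measurable hL hψ N).comp hL))

lemma integrable {μ : Measure Ω} (hL : MeasurePreserving L μ μ) (hψm : Measurable ψ)
    (hψ : Integrable ψ μ) : ∀ N, Integrable (birkhoffMax L ψ N) μ
  | 0 => integrable_zero _ _ _
  | N + 1 => (integrable_zero _ _ _).sup (hψ.add ((hL.integrable_comp_of_integrable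
      (integrable hL hψm hψ N))))

end birkhoffMax

section MaximalErgodic

variable {Ω : Type*} [MeasurableSpace Ω] {μ : Measure Ω} {L : Ω → Ω}

/-- Hopf's maximal ergodic theorem, by Garsia's argument: on `{0 < M}` the maximal function
satisfies `M ≤ ψ + M ∘ L`, off it `M - M ∘ L ≤ 0`, and `M - M ∘ L` integrates to zero. -/
theorem setIntegral_pos_birkhoffMax_nonneg (hL : MeasurePreserving L μ μ) {ψ : Ω → ℝ}
    (hψm : Measurable ψ) (hψ : Integrable ψ μ) (N : ℕ) :
    0 ≤ ∫ ω in {ω | 0 < birkhoffMax L ψ N ω}, ψ ω ∂μ := by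
  set M := birkhoffMax L ψ N
  set E := {ω | 0 < M ω}
  have hMm : Measurable M := birkhoffMax.measurable hL.measurable hψm N
  have hEm : MeasurableSet E := measurableSet_lt measurable_const hMm
  have hMi : Integrable M μ := birkhoffMax.integrable hL hψm hψ N
  have hMLi : Integrable (fun ω => M (L ω)) μ := hL.integrable_comp_of_integrable hMi
  have hMLint : ∫ ω, M (L ω) ∂μ = ∫ ω, M ω ∂μ := by
    rw [← integral_map hL.measurable.aemeasurable hMm.aestronglyMeasurable, hL.map_eq]
  have hzero : ∫ ω, (M ω - M (L ω)) ∂μ = 0 := by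
    rw [integral_sub hMi hMLi, hMLint, sub_self]
  have hon : ∫ ω in E, (M ω - M (L ω)) ∂μ ≤ ∫ ω in E, ψ ω ∂μ :=
    setIntegral_mono_on (hMi.sub hMLi).integrableOn hψ.integrableOn hEm fun ω hω => by
      linarith [birkhoffMax.le_add_comp_of_pos hω]
  have hoff : ∫ ω in Eᶜ, (M ω - M (L ω)) ∂μ ≤ 0 :=
    setIntegral_nonpos hEm.compl fun ω hω => by
      have hMω : M ω ≤ 0 := not_lt.1 hω
      linarith [birkhoffMax.nonneg (L := L) (ψ := ψ) N (L ω)]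
  linarith [integral_add_compl (f := fun ω => M ω - M (L ω)) hEm (hMi.sub hMLi)]

variable [IsFiniteMeasure μ]

theorem measure_exists_birkhoffSum_gt_le (hL : MeasurePreserving L μ μ) {φ : Ω → ℝ}
    (hφm : Measurable φ) (hφ : Integrable φ μ) (hφ0 : ∀ ω, 0 ≤ φ ω) {ε : ℝ} (hε : 0 < ε) :
    μ {ω | ∃ n : ℕ, ε * n < birkhoffSum L φ n ω} ≤ ENNReal.ofReal ((∫ ω, φ ω ∂μ) / ε) := by
  set ψ : Ω → ℝ := fun ω => φ ω - ε
  have hψm : Measurable ψ := hφm.sub measurable_const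
  have hψ : Integrable ψ μ := hφ.sub (integrable_const ε)
  set E : ℕ → Set Ω := fun N => {ω | 0 < birkhoffMax L ψ N ω}
  have hcover : {ω | ∃ n : ℕ, ε * n < birkhoffSum L φ n ω} ⊆ ⋃ N, E N := by
    rintro ω ⟨n, hn⟩
    refine mem_iUnion.2 ⟨n, lt_of_lt_of_le ?_ (birkhoffSum_le_birkhoffMax n ω)⟩
    have hshift : birkhoffSum L ψ n ω = birkhoffSum L φ n ω - ε * n := by
      simp [birkhoffSum, ψ, Finset.sum_sub_distrib, mul_comm]
    linarith
  have hEmono : Monotone E :=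
    monotone_nat_of_le_succ fun N ω hω => lt_of_lt_of_le hω (birkhoffMax.le_succ N ω)
  refine (measure_mono hcover).trans ?_
  rw [hEmono.directed_le.measure_iUnion]
  refine iSup_le fun N => ?_
  have hEm : MeasurableSet (E N) :=
    measurableSet_lt measurable_const (birkhoffMax.measurable hL.measurable hψm N)
  have hmax := setIntegral_pos_birkhoffMax_nonneg hL hψm hψ N
  rw [integral_sub hφ.integrableOn (integrableOn_const (measure_ne_top μ _)), setIntegral_const,
    smul_eq_mul] at hmax
  have hφE : ∫ ω in E N, φ ω ∂μ ≤ ∫ ω, φ ω ∂μ :=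
    setIntegral_le_integral hφ (Eventually.of_forall hφ0)
  rw [← ofReal_measureReal (measure_ne_top μ _)]
  exact ENNReal.ofReal_le_ofReal ((le_div_iff₀ hε).2 (by linarith))

theorem ae_forall_pos_exists_birkhoffSum_le (hL : MeasurePreserving L μ μ) {ι : Type*}
    {l : Filter ι} [l.NeBot] {φ : ι → Ω → ℝ} (hφm : ∀ i, Measurable (φ i))
    (hφ : ∀ i, Integrable (φ i) μ) (hφ0 : ∀ i ω, 0 ≤ φ i ω)
    (hlim : Tendsto (fun i => ∫ ω, φ i ω ∂μ) l (𝓝 0)) :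
    ∀ᵐ ω ∂μ, ∀ ε > 0, ∃ i, ∀ n : ℕ, birkhoffSum L (φ i) n ω ≤ ε * n := by
  have hfixed : ∀ ε > 0, ∀ᵐ ω ∂μ, ∃ i, ∀ n : ℕ, birkhoffSum L (φ i) n ω ≤ ε * n := by
    intro ε hε
    rw [ae_iff]
    have hbound : ∀ i, μ {ω | ¬∃ i, ∀ n : ℕ, birkhoffSum L (φ i) n ω ≤ ε * n}
        ≤ ENNReal.ofReal ((∫ ω, φ i ω ∂μ) / ε) := fun i =>
      (measure_mono fun ω hω => by push Not at hω; exact hω i).trans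
        (measure_exists_birkhoffSum_gt_le hL (hφm i) (hφ i) (hφ0 i) hε)
    have hlim' : Tendsto (fun i => ENNReal.ofReal ((∫ ω, φ i ω ∂μ) / ε)) l (𝓝 0) := by
      simpa using ENNReal.tendsto_ofReal (hlim.div_const ε)
    exact nonpos_iff_eq_zero.1 (ge_of_tendsto' hlim' hbound)
  filter_upwards [ae_all_iff.2 fun j : ℕ => hfixed (1 / (j + 1)) Nat.one_div_pos_of_nat]
    with ω hω ε hε
  obtain ⟨j, hj⟩ := exists_nat_one_div_lt hε
  obtain ⟨i, hi⟩ := hω j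
  exact ⟨i, fun n => (hi n).trans (by gcongr)⟩

end MaximalErgodic

lemma tendsto_integral_tailExcess {Ω : Type*} [MeasurableSpace Ω] {μ : Measure Ω} {D : ℝ → ℝ}
    (hmono : MonotoneOn D (Ici 0))
    (hDnonneg : ∀ t ∈ Ici (0 : ℝ), 0 ≤ D t) {f : Ω → ℝ} (hf : Measurable f)
    (hint : Integrable (fun ω => D |f ω|) μ) :
    Tendsto (fun c => ∫ ω, tailExcess D c (f ω) ∂μ) atTop (𝓝 0) := by
  have hlim := tendsto_integral_filter_of_dominated_convergence (μ := μ) (l := atTop)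
    (F := fun c ω => tailExcess D c (f ω)) (f := 0) _
    (Eventually.of_forall fun c => ((measurable_tailExcess hmono c).comp hf).aestronglyMeasurable)
    (Eventually.of_forall fun c => Eventually.of_forall fun ω =>
      norm_tailExcess_le hmono hDnonneg c (f ω)) hint
    (Eventually.of_forall fun ω => tendsto_const_nhds.congr' <|
      (eventually_ge_atTop |f ω|).mono fun c hc => (tailExcess_eq_zero_of_abs_le hc).symm)
  simpa using hlim

theorem strong_law_concave_moments_general
    {Ω : Type*} [MeasurableSpace Ω]
    (μ : Measure Ω) [IsProbabilityMeasure μ]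
    (L : Ω → Ω) (hL : Ergodic L μ)
    (f : Ω → ℝ) (hf : Measurable f)
    (D : ℝ → ℝ) (hD : ConcaveOn ℝ (Ici 0) D)
    (hDnonneg : ∀ t ∈ Ici (0:ℝ), 0 ≤ D t)
    (hDslope : Tendsto (fun t => D t / t) atTop (𝓝 0))
    (hint : Integrable (fun ω => D |f ω|) μ) :
    ∀ᵐ ω ∂μ, Tendsto
      (fun n : ℕ => D |∑ k ∈ Finset.range n, f (L^[k] ω)| / n) atTop (𝓝 0) := by
  have hmono := hD.monotoneOn_Ici_of_forall_le hDnonneg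
  have htails := ae_forall_pos_exists_birkhoffSum_le hL.toMeasurePreserving (l := atTop)
    (φ := fun (M : ℕ) ω => tailExcess D M (f ω))
    (fun M => (measurable_tailExcess hmono M).comp hf)
    (fun M => hint.mono' ((measurable_tailExcess hmono M).comp hf).aestronglyMeasurable
      (Eventually.of_forall fun ω => norm_tailExcess_le hmono hDnonneg M (f ω)))
    (fun M ω => tailExcess_nonneg hmono M (f ω))
    ((tendsto_integral_tailExcess hmono hDnonneg hf hint).comp tendsto_natCast_atTop_atTop)
  filter_upwards [htails] with ω hω
  exact tendsto_map_abs_sum_div_of_forall_exists_sum_tailExcess_le hD hDnonneg hDslope _ hω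

theorem strong_law_concave_moments
    {Ω : Type*} [MeasurableSpace Ω] [StandardBorelSpace Ω]
    (μ : Measure Ω) [IsProbabilityMeasure μ]
    (L : Ω → Ω) (hL : Ergodic L μ)
    (f : Ω → ℝ) (hf : Measurable f)
    (D : ℝ → ℝ) (hD : ConcaveOn ℝ (Ici 0) D)
    (hDnonneg : ∀ t ∈ Ici (0:ℝ), 0 ≤ D t)
    (hDslope : Tendsto (fun t => D t / t) atTop (𝓝 0))
    (hint : Integrable (fun ω => D |f ω|) μ) :
    ∀ᵐ ω ∂μ, Tendsto
      (fun n : ℕ => D |∑ k ∈ Finset.range n, f (L^[k] ω)| / n) atTop (𝓝 0) :=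
  strong_law_concave_moments_general μ L hL f hf D hD hDnonneg hDslope hint
end

section
/- Let $(\Omega, \mu)$ be a standard probability space, $L:\Omega\to\Omega$ ergodic measure-preserving, $f:\Omega\to\mathbf{R}$ measurable, $S_n = \sum_{k=0}^{n-1} f\circ L^k$, and $0<p<1$. If $|f|^p$ is integrable, then $\lim_{n\to\infty} n^{-1/p} S_n = 0$ almost surely. -/
/-!
Write `a k = |f (L^[k] ω)|` and `b k = (k + 1) ^ (1 / p)`. The elementary estimate
`∑ k, min t (b k) / b k ≤ C t ^ p` and the invariance of `μ` show that the series
`∑ k, min (a k) (b k) / b k` has finite integral, so it converges almost surely. Its terms then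
tend to `0`, hence eventually `a k < b k` and `∑ k, a k / b k` converges. For nonnegative `a` and
increasing `b → ∞`, Kronecker's lemma turns this into `(∑ k < n, a k) / b (n - 1) → 0`.
-/

open MeasureTheory Filter Topology Set
open Finset Real
open scoped ENNReal

lemma one_add_mul_sub_one_le_rpow_of_nonpos {u s : ℝ} (hu : 0 < u) (hs : s ≤ 0) :
    1 + s * (u - 1) ≤ u ^ s := by
  rw [rpow_def_of_pos hu]
  calc 1 + s * (u - 1) ≤ log u * s + 1 := by nlinarith [log_le_sub_one_of_pos hu]
    _ ≤ exp (log u * s) := add_one_le_exp _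

lemma sub_one_mul_add_one_rpow_neg_le {r y : ℝ} (hr : 1 ≤ r) (hy : 0 < y) :
    (r - 1) * (y + 1) ^ (-r) ≤ y ^ (1 - r) - (y + 1) ^ (1 - r) := by
  -- the tangent line at `y + 1` of the convex function `z ↦ z ^ (1 - r)` lies below it at `y`
  have hy1 : 0 < y + 1 := by linarith
  have hsplit : y ^ (1 - r) = (y + 1) ^ (1 - r) * (y / (y + 1)) ^ (1 - r) := by
    rw [← mul_rpow hy1.le (by positivity), mul_div_cancel₀ _ hy1.ne']
  have hbern := one_add_mul_sub_one_le_rpow_of_nonpos (div_pos hy hy1) (by linarith : 1 - r ≤ 0)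
  have hneg : (y + 1) ^ (1 - r) * (y / (y + 1) - 1) = -(y + 1) ^ (-r) := by
    rw [show 1 - r = -r + 1 by ring, rpow_add_one hy1.ne']
    field_simp
    ring
  calc (r - 1) * (y + 1) ^ (-r)
      = (y + 1) ^ (1 - r) * (1 + (1 - r) * (y / (y + 1) - 1)) - (y + 1) ^ (1 - r) := by
        linear_combination (r - 1) * hneg
    _ ≤ (y + 1) ^ (1 - r) * (y / (y + 1)) ^ (1 - r) - (y + 1) ^ (1 - r) := by gcongr
    _ = y ^ (1 - r) - (y + 1) ^ (1 - r) := by rw [hsplit]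

lemma sub_one_mul_sum_range_add_one_rpow_neg_le {r x : ℝ} (hr : 1 ≤ r) (hx : 0 < x) (n : ℕ) :
    (r - 1) * ∑ j ∈ range n, (x + j + 1) ^ (-r) ≤ x ^ (1 - r) := by
  calc (r - 1) * ∑ j ∈ range n, (x + j + 1) ^ (-r)
      ≤ ∑ j ∈ range n, ((x + j) ^ (1 - r) - (x + (j + 1 : ℕ)) ^ (1 - r)) := by
        rw [mul_sum]
        refine sum_le_sum fun j _ => ?_
        rw [Nat.cast_succ, ← add_assoc]
        exact sub_one_mul_add_one_rpow_neg_le hr (by positivity)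
    _ = x ^ (1 - r) - (x + n) ^ (1 - r) := by
        simpa using sum_range_sub' (fun j : ℕ => (x + j) ^ (1 - r)) n
    _ ≤ x ^ (1 - r) := sub_le_self _ (by positivity)

lemma sub_one_mul_sum_range_rpow_neg_le {r x : ℝ} (hr : 1 ≤ r) (hx : 1 ≤ x) (n : ℕ) :
    (r - 1) * ∑ j ∈ range n, (x + j) ^ (-r) ≤ r * x ^ (1 - r) := by
  have hx0 : 0 < x := by linarith
  have hfirst : x ^ (-r) ≤ x ^ (1 - r) := rpow_le_rpow_of_exponent_le hx (by linarith)
  calc (r - 1) * ∑ j ∈ range n, (x + j) ^ (-r)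
      ≤ (r - 1) * ∑ j ∈ range (n + 1), (x + j) ^ (-r) := by
        gcongr
        linarith
    _ = (r - 1) * ∑ j ∈ range n, (x + j + 1) ^ (-r) + (r - 1) * x ^ (-r) := by
        rw [sum_range_succ', mul_add]
        push_cast
        simp only [add_assoc, add_zero]
    _ ≤ x ^ (1 - r) + (r - 1) * x ^ (1 - r) := by
        gcongr
        exact sub_one_mul_sum_range_add_one_rpow_neg_le hr hx0 n
    _ = r * x ^ (1 - r) := by ring

lemma mul_rpow_one_sub_one_div_le {p t y : ℝ} (hp : 0 < p) (hp1 : p ≤ 1) (ht : 0 ≤ t)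
    (hy : t ^ p ≤ y) : t * y ^ (1 - 1 / p) ≤ t ^ p := by
  rcases ht.eq_or_lt with rfl | ht
  · simp [zero_rpow hp.ne']
  have hexp : 1 - 1 / p ≤ 0 := by
    rw [sub_nonpos, le_div_iff₀ hp]; linarith
  calc t * y ^ (1 - 1 / p) ≤ t * (t ^ p) ^ (1 - 1 / p) :=
        mul_le_mul_of_nonneg_left (rpow_le_rpow_of_nonpos (by positivity) hy hexp) ht.le
    _ = t ^ p := by
        rw [← rpow_mul ht.le, mul_one_sub, mul_one_div_cancel hp.ne', rpow_sub_one ht.ne']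
        field_simp

lemma sum_range_min_div_rpow_le {p t : ℝ} (hp : 0 < p) (hp1 : p < 1) (ht : 0 ≤ t) (n : ℕ) :
    ∑ k ∈ range n, min t (((k : ℝ) + 1) ^ (1 / p)) / ((k : ℝ) + 1) ^ (1 / p)
      ≤ (2 - p) / (1 - p) * t ^ p := by
  set F : ℕ → ℝ := fun k => min t (((k : ℝ) + 1) ^ (1 / p)) / ((k : ℝ) + 1) ^ (1 / p)
  have hb : ∀ k : ℕ, 0 < ((k : ℝ) + 1) ^ (1 / p) := fun k => by positivity
  have hF0 : ∀ k, 0 ≤ F k := fun k => div_nonneg (le_min ht (hb k).le) (hb k).le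
  have hF1 : ∀ k, F k ≤ 1 := fun k => div_le_one_of_le₀ (min_le_right _ _) (hb k).le
  have hFt : ∀ k, F k ≤ t * ((k : ℝ) + 1) ^ (-(1 / p)) := fun k => by
    rw [rpow_neg (by positivity), ← div_eq_mul_inv]
    exact div_le_div_of_nonneg_right (min_le_left _ _) (hb k).le
  -- the `M` terms with `k + 1 ≤ t ^ p` are at most `1`, the others at most `t (k + 1) ^ (-1 / p)`
  set M := ⌊t ^ p⌋₊
  have hM : (M : ℝ) ≤ t ^ p := Nat.floor_le (by positivity)
  have hM1 : t ^ p ≤ (M : ℝ) + 1 := (Nat.lt_floor_add_one _).le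
  have htail := sub_one_mul_sum_range_rpow_neg_le
    (one_le_one_div hp hp1.le) (le_add_of_nonneg_left M.cast_nonneg) n
  calc ∑ k ∈ range n, F k ≤ ∑ k ∈ range (M + n), F k :=
        sum_le_sum_of_subset_of_nonneg (range_mono le_add_self) fun k _ _ => hF0 k
    _ = ∑ k ∈ range M, F k + ∑ j ∈ range n, F (M + j) := sum_range_add F M n
    _ ≤ ∑ k ∈ range M, 1 + ∑ j ∈ range n, t * (((M : ℝ) + 1) + j) ^ (-(1 / p)) := by
        gcongr with k _ j _
        · exact hF1 k
        · exact (hFt (M + j)).trans_eq (by rw [Nat.cast_add, add_right_comm])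
    _ = M + t * ∑ j ∈ range n, (((M : ℝ) + 1) + j) ^ (-(1 / p)) := by
        simp [mul_sum]
    _ ≤ t ^ p + t * (((M : ℝ) + 1) ^ (1 - 1 / p) / (1 - p)) := by
        gcongr
        rw [le_div_iff₀ (by linarith)]
        calc (∑ j ∈ range n, (((M : ℝ) + 1) + j) ^ (-(1 / p))) * (1 - p)
            = p * ((1 / p - 1) * ∑ j ∈ range n, (((M : ℝ) + 1) + j) ^ (-(1 / p))) := by
              field_simp
          _ ≤ p * (1 / p * ((M : ℝ) + 1) ^ (1 - 1 / p)) := by gcongr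
          _ = ((M : ℝ) + 1) ^ (1 - 1 / p) := by field_simp
    _ ≤ t ^ p + t ^ p / (1 - p) := by
        rw [mul_div_assoc']
        gcongr
        exact mul_rpow_one_sub_one_div_le hp hp1.le ht hM1
    _ = (2 - p) / (1 - p) * t ^ p := by
        field_simp [show 1 - p ≠ 0 by linarith]
        ring

lemma tsum_ofReal_min_div_rpow_le {p t : ℝ} (hp : 0 < p) (hp1 : p < 1) (ht : 0 ≤ t) :
    ∑' k : ℕ, ENNReal.ofReal (min t (((k : ℝ) + 1) ^ (1 / p)) / ((k : ℝ) + 1) ^ (1 / p))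
      ≤ ENNReal.ofReal ((2 - p) / (1 - p) * t ^ p) := by
  refine ENNReal.tsum_le_of_sum_range_le fun n => ?_
  rw [← ENNReal.ofReal_sum_of_nonneg fun k _ => by positivity]
  exact ENNReal.ofReal_le_ofReal (sum_range_min_div_rpow_le hp hp1 ht n)

lemma summable_div_of_summable_min_div {a b : ℕ → ℝ} (hb : ∀ k, 0 < b k)
    (hs : Summable fun k => min (a k) (b k) / b k) : Summable fun k => a k / b k := by
  refine hs.congr_atTop ?_
  filter_upwards [hs.tendsto_atTop_zero.eventually_lt_const one_pos] with k hk
  have hab : a k ≤ b k := by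
    by_contra! h
    rw [min_eq_right h.le, div_self (hb k).ne'] at hk
    exact lt_irrefl _ hk
  rw [min_eq_left hab]

theorem tendsto_sum_range_succ_div_of_summable_div {a b : ℕ → ℝ} (ha : ∀ k, 0 ≤ a k)
    (hb : ∀ k, 0 < b k) (hb_mono : Monotone b) (hb_top : Tendsto b atTop atTop)
    (hs : Summable fun k => a k / b k) :
    Tendsto (fun n => (∑ k ∈ range (n + 1), a k) / b n) atTop (𝓝 0) := by
  set T : ℕ → ℝ := fun K => ∑' k, a k / b k - ∑ k ∈ range K, a k / b k
  have hT : Tendsto T atTop (𝓝 0) := by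
    simpa [T] using (tendsto_const_nhds (x := ∑' k, a k / b k)).sub hs.hasSum.tendsto_sum_nat
  have hsplit : ∀ K n, K ≤ n →
      (∑ k ∈ range (n + 1), a k) / b n ≤ (∑ k ∈ range K, a k) / b n + T K := by
    intro K n hKn
    have hIco : ∑ k ∈ Ico K (n + 1), a k ≤ b n * T K := by
      calc ∑ k ∈ Ico K (n + 1), a k ≤ ∑ k ∈ Ico K (n + 1), b n * (a k / b k) := by
            refine sum_le_sum fun k hk => ?_
            calc a k = b k * (a k / b k) := (mul_div_cancel₀ _ (hb k).ne').symm
              _ ≤ b n * (a k / b k) :=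
                mul_le_mul_of_nonneg_right (hb_mono (by grind)) (div_nonneg (ha k) (hb k).le)
        _ = b n * (∑ k ∈ range (n + 1), a k / b k - ∑ k ∈ range K, a k / b k) := by
            rw [← mul_sum, sum_Ico_eq_sub _ (by omega)]
        _ ≤ b n * T K := by
            gcongr
            · exact (hb n).le
            exact sub_le_sub_right (hs.sum_le_tsum _ fun k _ => div_nonneg (ha k) (hb k).le) _
    rw [← sum_range_add_sum_Ico _ (by omega : K ≤ n + 1), add_div]
    gcongr
    rwa [div_le_iff₀' (hb n)]
  refine tendsto_order.2 ⟨fun ε hε => Eventually.of_forall fun n => ?_, fun ε hε => ?_⟩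
  · exact hε.trans_le (div_nonneg (sum_nonneg fun k _ => ha k) (hb n).le)
  obtain ⟨K, hK⟩ := (hT.eventually_lt_const (half_pos hε)).exists
  have hhead : Tendsto (fun n => (∑ k ∈ range K, a k) / b n) atTop (𝓝 0) :=
    tendsto_const_nhds.div_atTop hb_top
  filter_upwards [hhead.eventually_lt_const (half_pos hε), eventually_ge_atTop K] with n hn hKn
  linarith [hsplit K n hKn]

theorem tendsto_sum_range_div_rpow_of_summable_min {a : ℕ → ℝ} {r : ℝ} (hr : 0 < r)
    (ha : ∀ k, 0 ≤ a k)
    (hs : Summable fun k => min (a k) (((k : ℝ) + 1) ^ r) / ((k : ℝ) + 1) ^ r) :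
    Tendsto (fun n : ℕ => (∑ k ∈ range n, a k) / (n : ℝ) ^ r) atTop (𝓝 0) := by
  have hb : ∀ k : ℕ, 0 < ((k : ℝ) + 1) ^ r := fun k => by positivity
  have hb_mono : Monotone fun k : ℕ => ((k : ℝ) + 1) ^ r := fun k l hkl => by
    dsimp only
    gcongr
  have hb_top : Tendsto (fun k : ℕ => ((k : ℝ) + 1) ^ r) atTop atTop :=
    (tendsto_rpow_atTop hr).comp (tendsto_natCast_atTop_atTop.atTop_add tendsto_const_nhds)
  rw [← tendsto_add_atTop_iff_nat 1]
  simpa only [Nat.cast_succ] using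
    tendsto_sum_range_succ_div_of_summable_div ha hb hb_mono hb_top
      (summable_div_of_summable_min_div hb hs)

lemma ae_summable_of_lintegral_tsum_ofReal_ne_top {Ω : Type*} [MeasurableSpace Ω]
    {μ : Measure Ω} {F : ℕ → Ω → ℝ} (hF : ∀ k, Measurable (F k))
    (hF0 : ∀ k ω, 0 ≤ F k ω) (h : ∫⁻ ω, ∑' k, ENNReal.ofReal (F k ω) ∂μ ≠ ∞) :
    ∀ᵐ ω ∂μ, Summable fun k => F k ω := by
  filter_upwards [ae_lt_top (Measurable.tsum fun k => (hF k).ennreal_ofReal) h] with ω hω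
  simpa [ENNReal.toReal_ofReal (hF0 _ ω)] using ENNReal.summable_toReal hω.ne

lemma MeasureTheory.MeasurePreserving.lintegral_tsum_comp_iterate {Ω : Type*}
    [MeasurableSpace Ω] {μ : Measure Ω} {L : Ω → Ω} (hL : MeasurePreserving L μ μ)
    {G : ℕ → Ω → ℝ≥0∞} (hG : ∀ k, Measurable (G k)) :
    ∫⁻ ω, ∑' k, G k (L^[k] ω) ∂μ = ∫⁻ ω, ∑' k, G k ω ∂μ := by
  have hGL : ∀ k, AEMeasurable (fun ω => G k (L^[k] ω)) μ := fun k =>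
    ((hG k).comp (hL.iterate k).measurable).aemeasurable
  rw [lintegral_tsum hGL, lintegral_tsum fun k => (hG k).aemeasurable]
  exact tsum_congr fun k => (hL.iterate k).lintegral_comp (hG k)

theorem ae_summable_min_abs_iterate_div_rpow {Ω : Type*} [MeasurableSpace Ω]
    {μ : Measure Ω} {L : Ω → Ω} (hL : MeasurePreserving L μ μ) {f : Ω → ℝ}
    (hf : Measurable f) {p : ℝ} (hp : 0 < p) (hp1 : p < 1)
    (hint : Integrable (fun ω => |f ω| ^ p) μ) :
    ∀ᵐ ω ∂μ, Summable fun k : ℕ =>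
      min |f (L^[k] ω)| (((k : ℝ) + 1) ^ (1 / p)) / ((k : ℝ) + 1) ^ (1 / p) := by
  set G : ℕ → Ω → ℝ := fun k ω =>
    min |f ω| (((k : ℝ) + 1) ^ (1 / p)) / ((k : ℝ) + 1) ^ (1 / p)
  have hG : ∀ k, Measurable (G k) := fun k => (hf.abs.min measurable_const).div_const _
  refine ae_summable_of_lintegral_tsum_ofReal_ne_top (F := fun k ω => G k (L^[k] ω))
    (fun k => (hG k).comp (hL.iterate k).measurable) (fun k ω => by positivity) ?_
  rw [hL.lintegral_tsum_comp_iterate fun k => (hG k).ennreal_ofReal]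
  refine ne_top_of_le_ne_top ((hint.const_mul ((2 - p) / (1 - p))).lintegral_lt_top.ne) ?_
  exact lintegral_mono fun ω => tsum_ofReal_min_div_rpow_le hp hp1 (abs_nonneg _)

theorem marcinkiewicz_zygmund_ergodic_general
    {Ω : Type*} [MeasurableSpace Ω]
    (μ : Measure Ω)
    (L : Ω → Ω) (hL : Ergodic L μ)
    (f : Ω → ℝ) (hf : Measurable f)
    (p : ℝ) (hp : 0 < p) (hp1 : p < 1)
    (hint : Integrable (fun ω => |f ω| ^ p) μ) :
    ∀ᵐ ω ∂μ, Tendsto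
      (fun n : ℕ => (∑ k ∈ Finset.range n, f (L^[k] ω)) / (n : ℝ) ^ (1 / p))
      atTop (𝓝 0) := by
  filter_upwards [ae_summable_min_abs_iterate_div_rpow hL.toMeasurePreserving hf hp hp1 hint]
    with ω hω
  refine squeeze_zero_norm (fun n => ?_)
    (tendsto_sum_range_div_rpow_of_summable_min (by positivity) (fun k => abs_nonneg _) hω)
  have hn : 0 ≤ (n : ℝ) ^ (1 / p) := rpow_nonneg n.cast_nonneg _
  rw [Real.norm_eq_abs, abs_div, abs_of_nonneg hn]
  exact div_le_div_of_nonneg_right (abs_sum_le_sum_abs _ _) hn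

theorem marcinkiewicz_zygmund_ergodic
    {Ω : Type*} [MeasurableSpace Ω] [StandardBorelSpace Ω]
    (μ : Measure Ω) [IsProbabilityMeasure μ]
    (L : Ω → Ω) (hL : Ergodic L μ)
    (f : Ω → ℝ) (hf : Measurable f)
    (p : ℝ) (hp : 0 < p) (hp1 : p < 1)
    (hint : Integrable (fun ω => |f ω| ^ p) μ) :
    ∀ᵐ ω ∂μ, Tendsto
      (fun n : ℕ => (∑ k ∈ Finset.range n, f (L^[k] ω)) / (n : ℝ) ^ (1 / p))
      atTop (𝓝 0) :=
  marcinkiewicz_zygmund_ergodic_general μ L hL f hf p hp hp1 hint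
end

section
/- Let $(X_k)_{k\ge 0}$ be i.i.d. real random variables and $0<p<1$ with $\mathbb{E}|X_0|^p < \infty$. Then $\lim_{n\to\infty} n^{-1/p} \sum_{k=0}^{n-1} X_k = 0$ almost surely. -/
/-!
For `t ≥ 0`, comparing with `∫ x ^ (-1/p)` (note `1/p > 1`) gives
`∑ₖ min 1 (t / (k+1)^(1/p)) ≤ (1 + t^p) / (1 - p)`. With `t = |Xₖ|` and the `Xₖ` identically
distributed, `∑ₖ min 1 (|Xₖ| / (k+1)^(1/p))` therefore has finite expectation, so it is finite a.s.
Then its terms tend to `0`, hence a.s. `∑ₖ |Xₖ| / (k+1)^(1/p) < ∞`, and Kronecker's lemma, here a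
dominated convergence argument for series, gives `n^(-1/p) ∑_{k<n} Xₖ → 0`.
-/

open MeasureTheory Filter Topology ProbabilityTheory Finset
open scoped ENNReal

lemma sum_Ico_natCast_add_one_rpow_neg_le {q : ℝ} (hq : 1 < q) {m : ℕ} (hm : 0 < m) (N : ℕ) :
    ∑ k ∈ Ico m N, ((k + 1 : ℕ) : ℝ) ^ (-q) ≤ (m : ℝ) ^ (1 - q) / (q - 1) := by
  have hm' : (0 : ℝ) < m := by exact_mod_cast hm
  rcases lt_or_ge N m with hNm | hmN
  · rw [Ico_eq_empty_of_le hNm.le, sum_empty]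
    exact div_nonneg (Real.rpow_nonneg hm'.le _) (by linarith)
  have hanti : AntitoneOn (fun x : ℝ => x ^ (-q)) (Set.Icc m N) := fun x hx y _ hxy =>
    Real.rpow_le_rpow_of_nonpos (hm'.trans_le hx.1) hxy (by linarith)
  have hzero : (0 : ℝ) ∉ Set.uIcc (m : ℝ) N := by
    rw [Set.uIcc_of_le (by exact_mod_cast hmN)]
    exact fun h => hm'.not_ge h.1
  calc ∑ k ∈ Ico m N, ((k + 1 : ℕ) : ℝ) ^ (-q) ≤ ∫ x in (m : ℝ)..N, x ^ (-q) :=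
        hanti.sum_le_integral_Ico hmN
    _ = ((m : ℝ) ^ (1 - q) - (N : ℝ) ^ (1 - q)) / (q - 1) := by
        rw [integral_rpow (Or.inr ⟨by linarith, hzero⟩), show -q + 1 = -(q - 1) by ring,
          div_neg, ← neg_div, neg_sub, neg_sub q 1]
    _ ≤ (m : ℝ) ^ (1 - q) / (q - 1) := by
        gcongr ?_ / _
        exact sub_le_self _ (Real.rpow_nonneg (Nat.cast_nonneg N) _)

lemma sum_range_min_one_div_rpow_le {p t : ℝ} (hp : 0 < p) (hp1 : p < 1) (ht : 0 ≤ t) (N : ℕ) :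
    ∑ k ∈ range N, min 1 (t / ((k : ℝ) + 1) ^ (1 / p)) ≤ (1 + t ^ p) / (1 - p) := by
  set q := 1 / p with hq_def
  have hq : 1 < q := by rw [hq_def, lt_div_iff₀ hp]; linarith
  set m := ⌊t ^ p⌋₊ + 1
  have hm : (0 : ℝ) < m := by positivity
  have hmt : (m : ℝ) ≤ t ^ p + 1 := by
    push_cast [m]; linarith [Nat.floor_le (Real.rpow_nonneg ht p)]
  have htm : t ≤ (m : ℝ) ^ q := by
    calc t = (t ^ p) ^ q := by rw [hq_def, one_div, Real.rpow_rpow_inv ht hp.ne']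
      _ ≤ (m : ℝ) ^ q := by
        gcongr
        exact_mod_cast (Nat.lt_floor_add_one (t ^ p)).le
  have hsplit := sum_range_add_sum_Ico (fun k => min 1 (t / ((k : ℝ) + 1) ^ q))
    (le_max_right N m)
  calc ∑ k ∈ range N, min 1 (t / ((k : ℝ) + 1) ^ q)
      ≤ ∑ k ∈ range (max N m), min 1 (t / ((k : ℝ) + 1) ^ q) :=
        sum_le_sum_of_subset_of_nonneg (range_mono (le_max_left N m))
          fun k _ _ => le_min zero_le_one (by positivity)
    _ ≤ m + t * ∑ k ∈ Ico m (max N m), ((k + 1 : ℕ) : ℝ) ^ (-q) := by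
        rw [← hsplit, mul_sum]
        gcongr
        · simpa using sum_le_card_nsmul (range m) _ (1 : ℝ) fun k _ => min_le_left _ _
        · rw [Real.rpow_neg (by positivity), ← div_eq_mul_inv, Nat.cast_add_one]
          exact min_le_right _ _
    _ ≤ m + t * ((m : ℝ) ^ (1 - q) / (q - 1)) := by
        gcongr
        exact sum_Ico_natCast_add_one_rpow_neg_le hq (by exact_mod_cast hm) _
    _ ≤ m + m / (q - 1) := by
        rw [← mul_div_assoc]
        gcongr
        calc t * (m : ℝ) ^ (1 - q) ≤ (m : ℝ) ^ q * (m : ℝ) ^ (1 - q) := by gcongr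
          _ = m := by rw [← Real.rpow_add hm, add_sub_cancel, Real.rpow_one]
    _ = m / (1 - p) := by
        have h1p : 1 - p ≠ 0 := (sub_pos.2 hp1).ne'
        rw [hq_def]
        field_simp
        ring
    _ ≤ (1 + t ^ p) / (1 - p) := by
        gcongr
        linarith

lemma ae_summable_of_identDistrib {Ω E : Type*} [MeasurableSpace Ω] [MeasurableSpace E]
    {μ : Measure Ω} {Y : ℕ → Ω → E} (hY : ∀ k, IdentDistrib (Y k) (Y 0) μ μ)
    {g : ℕ → E → ℝ} (hg : ∀ k, Measurable (g k)) (hg0 : ∀ k x, 0 ≤ g k x)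
    (hfin : ∫⁻ ω, ∑' k, ENNReal.ofReal (g k (Y 0 ω)) ∂μ ≠ ∞) :
    ∀ᵐ ω ∂μ, Summable fun k => g k (Y k ω) := by
  have hmeas (j k : ℕ) : AEMeasurable (fun ω => ENNReal.ofReal (g k (Y j ω))) μ :=
    (ENNReal.measurable_ofReal.comp (hg k)).comp_aemeasurable (hY j).aemeasurable_fst
  have hsame : ∫⁻ ω, ∑' k, ENNReal.ofReal (g k (Y k ω)) ∂μ
      = ∫⁻ ω, ∑' k, ENNReal.ofReal (g k (Y 0 ω)) ∂μ := by
    rw [lintegral_tsum fun k => hmeas k k, lintegral_tsum fun k => hmeas 0 k]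
    exact tsum_congr fun k =>
      ((hY k).comp (ENNReal.measurable_ofReal.comp (hg k))).lintegral_eq
  filter_upwards [ae_lt_top' (AEMeasurable.tsum fun k => hmeas k k) (hsame ▸ hfin)]
    with ω hω
  exact (ENNReal.summable_toReal hω.ne).congr fun k => ENNReal.toReal_ofReal (hg0 k _)

lemma summable_of_summable_min_one {a : ℕ → ℝ} (ha : ∀ k, 0 ≤ a k)
    (h : Summable fun k => min 1 (a k)) : Summable a := by
  refine h.of_norm_bounded_eventually_nat ?_
  filter_upwards [h.tendsto_atTop_zero.eventually (gt_mem_nhds one_pos)] with k hk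
  rw [Real.norm_of_nonneg (ha k)]
  exact (min_eq_right ((min_lt_iff.1 hk).resolve_left (lt_irrefl 1)).le).ge

lemma tendsto_sum_range_div_rpow_of_summable {x : ℕ → ℝ} {q : ℝ} (hq : 0 < q)
    (hx : Summable fun k => |x k| / ((k : ℝ) + 1) ^ q) :
    Tendsto (fun n : ℕ => (∑ k ∈ range n, x k) / (n : ℝ) ^ q) atTop (𝓝 0) := by
  set f : ℕ → ℕ → ℝ := fun n k => if k < n then |x k| / (n : ℝ) ^ q else 0
  have hf : Tendsto (fun n => ∑' k, f n k) atTop (𝓝 0) := by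
    have := tendsto_tsum_of_dominated_convergence (𝓕 := atTop) (f := f) (g := fun _ => 0) hx ?_ ?_
    · simpa using this
    · intro k
      have hpow := (tendsto_rpow_atTop hq).comp tendsto_natCast_atTop_atTop
      refine ((tendsto_const_nhds (x := |x k|)).div_atTop hpow).congr' ?_
      filter_upwards [eventually_gt_atTop k] with n hn
      exact (if_pos hn).symm
    · filter_upwards with n k
      simp only [f]
      split_ifs with hkn
      · rw [Real.norm_of_nonneg (by positivity)]
        gcongr
        exact_mod_cast hkn
      · rw [norm_zero]
        positivity
  refine squeeze_zero_norm' ?_ hf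
  filter_upwards with n
  rw [tsum_eq_sum (s := range n) fun k hk => if_neg (by simpa using hk), norm_div,
    Real.norm_eq_abs, Real.norm_of_nonneg (by positivity),
    sum_congr rfl fun k hk => if_pos (mem_range.1 hk), ← sum_div]
  gcongr
  exact abs_sum_le_sum_abs _ _

theorem marcinkiewicz_zygmund_iid_general
    {Ω : Type*} [MeasurableSpace Ω]
    (μ : Measure Ω) [IsProbabilityMeasure μ]
    (X : ℕ → Ω → ℝ)
    (hident : ∀ i, IdentDistrib (X i) (X 0) μ μ)
    (p : ℝ) (hp : 0 < p) (hp1 : p < 1)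
    (hint : Integrable (fun ω => |X 0 ω| ^ p) μ) :
    ∀ᵐ ω ∂μ, Tendsto
      (fun n : ℕ => (∑ k ∈ Finset.range n, X k ω) / (n : ℝ) ^ (1 / p))
      atTop (𝓝 0) := by
  set g : ℕ → ℝ → ℝ := fun k x => min 1 (|x| / ((k : ℝ) + 1) ^ (1 / p))
  have hg0 (k : ℕ) (x : ℝ) : 0 ≤ g k x := le_min zero_le_one (by positivity)
  have hfin : ∫⁻ ω, ∑' k, ENNReal.ofReal (g k (X 0 ω)) ∂μ ≠ ∞ := by
    refine ne_top_of_le_ne_top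
      (((integrable_const 1).add hint).div_const (1 - p)).lintegral_lt_top.ne
      (lintegral_mono fun ω => ENNReal.tsum_le_of_sum_range_le fun N => ?_)
    rw [← ENNReal.ofReal_sum_of_nonneg fun k _ => hg0 k _]
    exact ENNReal.ofReal_le_ofReal (sum_range_min_one_div_rpow_le hp hp1 (abs_nonneg _) N)
  filter_upwards [ae_summable_of_identDistrib hident (fun k => by fun_prop) hg0 hfin] with ω hω
  exact tendsto_sum_range_div_rpow_of_summable (by positivity)
    (summable_of_summable_min_one (fun k => by positivity) hω)

theorem marcinkiewicz_zygmund_iid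
    {Ω : Type*} [MeasurableSpace Ω]
    (μ : Measure Ω) [IsProbabilityMeasure μ]
    (X : ℕ → Ω → ℝ) (hmeas : ∀ i, Measurable (X i))
    (hindep : iIndepFun X μ)
    (hident : ∀ i, IdentDistrib (X i) (X 0) μ μ)
    (p : ℝ) (hp : 0 < p) (hp1 : p < 1)
    (hint : Integrable (fun ω => |X 0 ω| ^ p) μ) :
    ∀ᵐ ω ∂μ, Tendsto
      (fun n : ℕ => (∑ k ∈ Finset.range n, X k ω) / (n : ℝ) ^ (1 / p))
      atTop (𝓝 0) :=
  marcinkiewicz_zygmund_iid_general μ X hident p hp hp1 hint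
end

section
/- Let $D:\mathbf{R}_+\to\mathbf{R}_+$ be measurable and quasi-concave in the sense that there is a constant $C\ge 1$ with $D(\lambda s + (1-\lambda) t) \ge C^{-1}(\lambda D(s) + (1-\lambda) D(t))$ for all $s,t\ge 0$, $\lambda\in[0,1]$, and suppose $D(t)/t\to 0$ as $t\to\infty$. Then there exist concave functions $D_1, D_2:\mathbf{R}_+\to\mathbf{R}_+$ and a constant $c\ge 1$ with $D_1 \le D \le D_2 \le c\, D_1$. -/
open Filter Topology Set

/-!
The concave majorant `E` of `D`, the infimum of its affine majorants, is concave and dominates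
`D`. Quasi-concavity says that `C * D x` lies above every chord of `D` across `x`, so for `x > 0`
some affine majorant passes through `(x, C * D x)`, whence `E ≤ C * D` on `(0, ∞)`. Lowering `E`
to `D 0` at the extreme point `0` keeps it concave, and then `D₂ = E`, `D₁ = C⁻¹ * E`, `c = C`.
-/

/-- The paper's "quasi-concavity" with constant `C` (unrelated to Mathlib's `QuasiconcaveOn`). -/
def NearlyConcaveOn (C : ℝ) (s : Set ℝ) (f : ℝ → ℝ) : Prop :=
  ∀ x ∈ s, ∀ y ∈ s, ∀ lam ∈ Icc (0:ℝ) 1,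
    C⁻¹ * (lam * f x + (1 - lam) * f y) ≤ f (lam * x + (1 - lam) * y)

namespace NearlyConcaveOn

variable {C : ℝ} {s : Set ℝ} {f : ℝ → ℝ}

theorem le_mul_self (hf : NearlyConcaveOn C s f) (hC : 0 < C) {x : ℝ} (hx : x ∈ s) :
    f x ≤ C * f x := by
  have h := hf x hx x hx 1 ⟨zero_le_one, le_rfl⟩
  simp only [one_mul, sub_self, zero_mul, add_zero] at h
  rwa [inv_mul_le_iff₀ hC] at h

theorem chord_le (hf : NearlyConcaveOn C s f) (hC : 0 < C) {u x v : ℝ} (hu : u ∈ s) (hv : v ∈ s)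
    (hux : u ≤ x) (hxv : x ≤ v) (huv : u < v) :
    (v - x) * f u + (x - u) * f v ≤ (v - u) * (C * f x) := by
  have hvu : 0 < v - u := sub_pos.2 huv
  set lam := (x - u) / (v - u) with hlam_def
  have hlam : lam ∈ Icc (0:ℝ) 1 :=
    ⟨div_nonneg (by linarith) hvu.le, (div_le_one hvu).2 (by linarith)⟩
  have hx : lam * v + (1 - lam) * u = x := by rw [hlam_def]; field_simp; ring
  have h := hf v hv u hu lam hlam
  rw [hx, inv_mul_le_iff₀ hC] at h
  calc (v - x) * f u + (x - u) * f v = (v - u) * (lam * f v + (1 - lam) * f u) := by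
        rw [hlam_def]; field_simp; ring
    _ ≤ (v - u) * (C * f x) := mul_le_mul_of_nonneg_left h hvu.le

end NearlyConcaveOn

def affineMajorants (s : Set ℝ) (f : ℝ → ℝ) : Set (ℝ × ℝ) :=
  {p | ∀ t ∈ s, f t ≤ p.1 * t + p.2}

noncomputable def concaveMajorant (s : Set ℝ) (f : ℝ → ℝ) (x : ℝ) : ℝ :=
  sInf ((fun p : ℝ × ℝ => p.1 * x + p.2) '' affineMajorants s f)

section concaveMajorant

variable {s : Set ℝ} {f : ℝ → ℝ} {x : ℝ}

theorem le_concaveMajorant (h : (affineMajorants s f).Nonempty) (hx : x ∈ s) :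
    f x ≤ concaveMajorant s f x :=
  le_csInf (h.image _) (by rintro _ ⟨p, hp, rfl⟩; exact hp x hx)

theorem concaveMajorant_le {p : ℝ × ℝ} (hp : p ∈ affineMajorants s f) (hx : x ∈ s) :
    concaveMajorant s f x ≤ p.1 * x + p.2 :=
  csInf_le ⟨f x, by rintro _ ⟨q, hq, rfl⟩; exact hq x hx⟩ ⟨p, hp, rfl⟩

theorem concaveOn_concaveMajorant (hs : Convex ℝ s) (h : (affineMajorants s f).Nonempty) :
    ConcaveOn ℝ s (concaveMajorant s f) := by
  refine ⟨hs, fun x hx y hy a b ha hb hab => le_csInf (h.image _) ?_⟩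
  rintro _ ⟨p, hp, rfl⟩
  calc a • concaveMajorant s f x + b • concaveMajorant s f y
      ≤ a * (p.1 * x + p.2) + b * (p.1 * y + p.2) :=
        add_le_add (mul_le_mul_of_nonneg_left (concaveMajorant_le hp hx) ha)
          (mul_le_mul_of_nonneg_left (concaveMajorant_le hp hy) hb)
    _ = p.1 * (a • x + b • y) + p.2 := by
        simp only [smul_eq_mul]; linear_combination p.2 * hab

end concaveMajorant

theorem exists_mem_affineMajorants_of_chord_le {s : Set ℝ} {f : ℝ → ℝ} {x y u₀ v₀ : ℝ}
    (hu₀ : u₀ ∈ s) (hu₀x : u₀ < x) (hv₀ : v₀ ∈ s) (hxv₀ : x < v₀) (hfx : f x ≤ y)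
    (hchord : ∀ u ∈ s, ∀ v ∈ s, u < x → x < v → (v - x) * f u + (x - u) * f v ≤ (v - u) * y) :
    ∃ p ∈ affineMajorants s f, p.1 * x + p.2 = y := by
  set R := (fun v => (f v - y) / (v - x)) '' (s ∩ Ioi x)
  have hslope : ∀ u ∈ s, u < x → ∀ r ∈ R, r ≤ (y - f u) / (x - u) := by
    rintro u hu hux _ ⟨v, ⟨hv, hxv⟩, rfl⟩
    rw [div_le_div_iff₀ (sub_pos.2 hxv) (sub_pos.2 hux)]
    nlinarith [hchord u hu v hv hux hxv]
  have hR : R.Nonempty := ⟨_, v₀, ⟨hv₀, hxv₀⟩, rfl⟩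
  have hRbdd : BddAbove R := ⟨_, hslope u₀ hu₀ hu₀x⟩
  refine ⟨(sSup R, y - sSup R * x), fun t ht => ?_, by ring⟩
  rcases lt_trichotomy t x with htx | rfl | hxt
  · have h := (le_div_iff₀ (sub_pos.2 htx)).1 (csSup_le hR (hslope t ht htx))
    linarith
  · linarith
  · have h := (div_le_iff₀ (sub_pos.2 hxt)).1 (le_csSup hRbdd ⟨t, ⟨ht, hxt⟩, rfl⟩)
    linarith

theorem NearlyConcaveOn.exists_mem_affineMajorants {C : ℝ} {f : ℝ → ℝ}
    (hf : NearlyConcaveOn C (Ici 0) f) (hC : 0 < C) {x : ℝ} (hx : 0 < x) :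
    ∃ p ∈ affineMajorants (Ici 0) f, p.1 * x + p.2 = C * f x :=
  exists_mem_affineMajorants_of_chord_le (u₀ := 0) (v₀ := x + 1) self_mem_Ici hx
    (by simp only [mem_Ici]; linarith) (by linarith) (hf.le_mul_self hC hx.le)
    fun _ hu _ hv hux hxv => hf.chord_le hC hu hv hux.le hxv.le (hux.trans hxv)

theorem left_mem_extremePoints_Ici {a : ℝ} : a ∈ (Ici a).extremePoints ℝ := by
  refine ⟨self_mem_Ici, fun x₁ hx₁ x₂ hx₂ ⟨α, β, hα, hβ, hαβ, h⟩ => ?_⟩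
  simp only [mem_Ici, smul_eq_mul] at hx₁ hx₂ h
  have h₁ := mul_nonneg hα.le (sub_nonneg.2 hx₁)
  have h₂ := mul_nonneg hβ.le (sub_nonneg.2 hx₂)
  have hsum : α * (x₁ - a) + β * (x₂ - a) = 0 := by linear_combination h - a * hαβ
  have : α * (x₁ - a) = 0 := by linarith
  linarith [(mul_eq_zero.1 this).resolve_left hα.ne']

theorem ConcaveOn.update_of_mem_extremePoints {E : Type*} [AddCommGroup E] [Module ℝ E]
    [DecidableEq E] {s : Set E} {f : E → ℝ} {x : E} {w : ℝ} (hf : ConcaveOn ℝ s f)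
    (hx : x ∈ s.extremePoints ℝ) (hw : w ≤ f x) : ConcaveOn ℝ s (Function.update f x w) := by
  have hle : ∀ y, Function.update f x w y ≤ f y := by
    intro y
    rcases eq_or_ne y x with rfl | hy
    · simpa using hw
    · simp [hy]
  refine ⟨hf.1, fun y hy z hz a b ha hb hab => ?_⟩
  by_cases hxyz : a • y + b • z = x
  · rcases ha.eq_or_lt with rfl | ha'
    · simp_all
    rcases hb.eq_or_lt with rfl | hb'
    · simp_all
    obtain ⟨rfl, rfl⟩ := (mem_extremePoints.1 hx).2 y hy z hz ⟨a, b, ha', hb', hab, hxyz⟩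
    simp only [← add_smul, hab, one_smul, le_refl]
  · rw [Function.update_of_ne hxyz]
    exact (add_le_add (smul_le_smul_of_nonneg_left (hle y) ha)
      (smul_le_smul_of_nonneg_left (hle z) hb)).trans (hf.2 hy hz ha hb hab)

theorem mulholland_sandwich_general
    (D : ℝ → ℝ)
    (hDnonneg : ∀ t ∈ Ici (0:ℝ), 0 ≤ D t)
    (C : ℝ) (hC : 1 ≤ C)
    (hquasi : ∀ s ∈ Ici (0:ℝ), ∀ t ∈ Ici (0:ℝ), ∀ lam ∈ Icc (0:ℝ) 1,
      C⁻¹ * (lam * D s + (1 - lam) * D t) ≤ D (lam * s + (1 - lam) * t)) :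
    ∃ (D₁ D₂ : ℝ → ℝ) (c : ℝ), 1 ≤ c ∧
      ConcaveOn ℝ (Ici 0) D₁ ∧ ConcaveOn ℝ (Ici 0) D₂ ∧
      (∀ t ∈ Ici (0:ℝ), 0 ≤ D₁ t) ∧ (∀ t ∈ Ici (0:ℝ), 0 ≤ D₂ t) ∧
      (∀ t ∈ Ici (0:ℝ), D₁ t ≤ D t ∧ D t ≤ D₂ t ∧ D₂ t ≤ c * D₁ t) := by
  have hC0 : 0 < C := one_pos.trans_le hC
  have hD : NearlyConcaveOn C (Ici 0) D := hquasi
  have hA : (affineMajorants (Ici 0) D).Nonempty :=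
    let ⟨p, hp, _⟩ := hD.exists_mem_affineMajorants hC0 one_pos; ⟨p, hp⟩
  -- The concave majorant can exceed `C * D` at the endpoint `0`, so it is lowered there.
  set D₂ := Function.update (concaveMajorant (Ici 0) D) 0 (D 0)
  have hD₂ : ConcaveOn ℝ (Ici 0) D₂ :=
    (concaveOn_concaveMajorant (convex_Ici 0) hA).update_of_mem_extremePoints
      left_mem_extremePoints_Ici (le_concaveMajorant hA self_mem_Ici)
  have hD_le : ∀ t ∈ Ici (0:ℝ), D t ≤ D₂ t := by
    intro t ht
    rcases eq_or_ne t 0 with rfl | ht0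
    · simp [D₂]
    · simpa [D₂, ht0] using le_concaveMajorant hA ht
  have hD₂_le : ∀ t ∈ Ici (0:ℝ), D₂ t ≤ C * D t := by
    intro t ht
    rcases eq_or_ne t 0 with rfl | ht0
    · simpa [D₂] using hD.le_mul_self hC0 ht
    · obtain ⟨p, hp, hpt⟩ := hD.exists_mem_affineMajorants hC0 (lt_of_le_of_ne ht ht0.symm)
      simpa [D₂, ht0, hpt] using concaveMajorant_le hp ht
  refine ⟨C⁻¹ • D₂, D₂, C, hC, hD₂.smul (inv_nonneg.2 hC0.le), hD₂,
    fun t ht => ?_, fun t ht => (hDnonneg t ht).trans (hD_le t ht), fun t ht => ?_⟩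
  · have := (hDnonneg t ht).trans (hD_le t ht)
    simp only [Pi.smul_apply, smul_eq_mul]; positivity
  · simp only [Pi.smul_apply, smul_eq_mul]
    refine ⟨(inv_mul_le_iff₀ hC0).2 (hD₂_le t ht), hD_le t ht, ?_⟩
    rw [mul_inv_cancel_left₀ hC0.ne']

theorem mulholland_sandwich
    (D : ℝ → ℝ) (hDmeas : Measurable D)
    (hDnonneg : ∀ t ∈ Ici (0:ℝ), 0 ≤ D t)
    (C : ℝ) (hC : 1 ≤ C)
    (hquasi : ∀ s ∈ Ici (0:ℝ), ∀ t ∈ Ici (0:ℝ), ∀ lam ∈ Icc (0:ℝ) 1,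
      C⁻¹ * (lam * D s + (1 - lam) * D t) ≤ D (lam * s + (1 - lam) * t))
    (hDslope : Tendsto (fun t => D t / t) atTop (𝓝 0)) :
    ∃ (D₁ D₂ : ℝ → ℝ) (c : ℝ), 1 ≤ c ∧
      ConcaveOn ℝ (Ici 0) D₁ ∧ ConcaveOn ℝ (Ici 0) D₂ ∧
      (∀ t ∈ Ici (0:ℝ), 0 ≤ D₁ t) ∧ (∀ t ∈ Ici (0:ℝ), 0 ≤ D₂ t) ∧
      (∀ t ∈ Ici (0:ℝ), D₁ t ≤ D t ∧ D t ≤ D₂ t ∧ D₂ t ≤ c * D₁ t) :=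
  mulholland_sandwich_general D hDnonneg C hC hquasi
end

section
/- Let $D:\mathbf{R}_+\to\mathbf{R}_+$ be concave, non-decreasing, unbounded, with $D(0)=0$, and consider the metric $d(x,y)=D(|x-y|)$ on $\mathbf{R}$. Suppose additionally $\lim_{t\to\infty}D(t)/t=0$. Then every horofunction of $(\mathbf{R},d)$ normalized at $0$ is identically zero; that is, any function $h:\mathbf{R}\to\mathbf{R}$ that is a limit, uniformly on compact sets, of functions $x\mapsto d(t_n,x)-d(t_n,0)$ for some sequence $t_n$ with $|t_n|\to\infty$, satisfies $h\equiv 0$. -/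
open Filter Topology Set

/-- Key concavity fact: slopes from the origin are nonincreasing. -/
lemma slope_mono_aux (D : ℝ → ℝ) (hD : ConcaveOn ℝ (Ici 0) D) (hD0 : D 0 = 0)
    {a b : ℝ} (ha : 0 < a) (hab : a ≤ b) : a * D b ≤ b * D a := by
  have hb : 0 < b := ha.trans_le hab
  have h1 : 0 ≤ a / b := by positivity
  have h2 : 0 ≤ 1 - a / b := by
    have : a / b ≤ 1 := (div_le_one hb).2 hab
    linarith
  have h3 : a / b + (1 - a / b) = 1 := by ring
  have := hD.2 (show b ∈ Ici (0:ℝ) from hb.le) (show (0:ℝ) ∈ Ici (0:ℝ) from self_mem_Ici)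
    h1 h2 h3
  simp only [smul_eq_mul, mul_zero, add_zero, hD0] at this
  have hba : a / b * b = a := div_mul_cancel₀ a hb.ne'
  rw [hba] at this
  -- this : a / b * D b ≤ D a
  calc a * D b = (a / b * D b) * b := by field_simp
    _ ≤ D a * b := by nlinarith
    _ = b * D a := mul_comm _ _

theorem horofunctions_trivial
    (D : ℝ → ℝ) (hD : ConcaveOn ℝ (Ici 0) D)
    (hDnonneg : ∀ t ∈ Ici (0:ℝ), 0 ≤ D t)
    (hmono : MonotoneOn D (Ici 0)) (hD0 : D 0 = 0)
    (hunbdd : Tendsto D atTop atTop)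
    (hDslope : Tendsto (fun t => D t / t) atTop (𝓝 0))
    (h : ℝ → ℝ) (t : ℕ → ℝ) (ht : Tendsto (fun n => |t n|) atTop atTop)
    (hconv : TendstoLocallyUniformly
      (fun n (x : ℝ) => D |t n - x| - D |t n - 0|) h atTop) :
    ∀ x : ℝ, h x = 0 := by
  intro x
  have hpt : Tendsto (fun n => D |t n - x| - D |t n - 0|) atTop (𝓝 (h x)) :=
    (hconv.tendstoLocallyUniformlyOn (s := univ)).tendsto_at (mem_univ x)
  -- Let a n = min, b n = max of the two distances.
  set a : ℕ → ℝ := fun n => min |t n - x| |t n| with ha_def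
  set b : ℕ → ℝ := fun n => max |t n - x| |t n| with hb_def
  have ha_tendsto : Tendsto a atTop atTop := by
    apply tendsto_atTop_mono (f := fun n => |t n| - |x|) _ (ht.atTop_add tendsto_const_nhds)
    · intro n
      have h1 : |t n| - |x| ≤ |t n - x| := by
        have := abs_sub_abs_le_abs_sub (t n) x
        linarith
      have h2 : |t n| - |x| ≤ |t n| := by
        have := abs_nonneg x; linarith
      exact le_min h1 h2
  -- the bound tends to 0
  have hbound : Tendsto (fun n => |x| * (D (a n) / a n)) atTop (𝓝 0) := by
    have := (hDslope.comp ha_tendsto).const_mul |x|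
    simpa using this
  have hzero : Tendsto (fun n => D |t n - x| - D |t n - 0|) atTop (𝓝 0) := by
    apply squeeze_zero_norm' _ hbound
    filter_upwards [ha_tendsto.eventually_gt_atTop 0] with n han
    have haan : 0 < a n := han
    have hab : a n ≤ b n := min_le_max
    have hanonneg : (0:ℝ) ≤ a n := haan.le
    have hbnonneg : (0:ℝ) ≤ b n := hanonneg.trans hab
    have hmono' : D (a n) ≤ D (b n) := hmono hanonneg hbnonneg hab
    have hba : b n - a n ≤ |x| := by
      have h1 : |t n - x| - |t n| ≤ |x| := by
        have := abs_sub_abs_le_abs_sub (t n - x) (t n)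
        simp only [sub_sub_cancel_left, abs_neg] at this
        linarith
      have h2 : |t n| - |t n - x| ≤ |x| := by
        have := abs_sub_abs_le_abs_sub (t n) (t n - x)
        simp only [sub_sub_cancel, abs_neg] at this
        linarith [this]
      rcases le_total (|t n - x|) (|t n|) with hc | hc
      · simp only [ha_def, hb_def, min_eq_left hc, max_eq_right hc]
        linarith
      · simp only [ha_def, hb_def, min_eq_right hc, max_eq_left hc]
        linarith
    have hslope : a n * D (b n) ≤ b n * D (a n) := slope_mono_aux D hD hD0 haan hab
    have hDa_nonneg : 0 ≤ D (a n) := hDnonneg _ hanonneg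
    have hkey : D (b n) - D (a n) ≤ |x| * (D (a n) / a n) := by
      have h1 : D (b n) - D (a n) ≤ (b n - a n) * (D (a n) / a n) := by
        rw [sub_le_iff_le_add]
        have : D (b n) ≤ b n * D (a n) / a n := by
          rw [le_div_iff₀ haan]
          nlinarith
        calc D (b n) ≤ b n * D (a n) / a n := this
          _ = (b n - a n) * (D (a n) / a n) + D (a n) := by field_simp; ring
      calc D (b n) - D (a n) ≤ (b n - a n) * (D (a n) / a n) := h1
        _ ≤ |x| * (D (a n) / a n) := by
            apply mul_le_mul_of_nonneg_right hba
            positivity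
    -- now the norm bound
    have habs : |(D |t n - x| - D |t n - 0|)| = D (b n) - D (a n) := by
      rw [sub_zero]
      rcases le_total (|t n - x|) (|t n|) with hc | hc
      · simp only [ha_def, hb_def, min_eq_left hc, max_eq_right hc]
        rw [abs_sub_comm, abs_of_nonneg]
        have := hmono (abs_nonneg (t n - x)) (abs_nonneg (t n)) hc
        linarith
      · simp only [ha_def, hb_def, min_eq_right hc, max_eq_left hc]
        rw [abs_of_nonneg]
        have := hmono (abs_nonneg (t n)) (abs_nonneg (t n - x)) hc
        linarith
    calc ‖D |t n - x| - D |t n - 0|‖ = |(D |t n - x| - D |t n - 0|)| := rfl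
      _ = D (b n) - D (a n) := habs
      _ ≤ |x| * (D (a n) / a n) := hkey
  exact tendsto_nhds_unique hpt hzero
end

section
/- Let $(\Omega,\mu)$ be a standard probability space, $L$ ergodic measure-preserving, and $f:\Omega\to\mathbf{R}$ measurable with $\log^+|f|\in L^1$. Then $\lim_{n\to\infty} \frac{1}{n}\log(1+|S_n|) = 0$ almost surely, where $S_n=\sum_{k=0}^{n-1} f\circ L^k$. -/
/-!
Pathwise, `log (1 + |S_n|) ≤ log (n + 1) + max_{k ≤ n} g (L^[k] ω)` with `g = log (1 + |f|)`,
which is integrable. So it suffices that `g (L^[n] ω) / n → 0` almost surely, and this holds for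
any measure-preserving `L`: by invariance
`∑ n, μ {g ∘ L^[n] > ε n} = ∑ n, μ {g > ε n}`, which is finite because `g` is integrable, so
Borel–Cantelli applies.
-/

open MeasureTheory Filter Topology Set Real

theorem Real.log_one_add_abs_le (x : ℝ) : log (1 + |x|) ≤ log 2 + log⁺ x := by
  have h := posLog_add (x := 1) (y := |x|)
  rwa [posLog_one, add_zero, posLog_abs,
    posLog_eq_log (by rw [abs_of_nonneg (by positivity)]; linarith [abs_nonneg x])] at h

theorem integrable_log_one_add_abs {Ω : Type*} [MeasurableSpace Ω] {μ : Measure Ω}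
    [IsFiniteMeasure μ] {f : Ω → ℝ} (hf : AEMeasurable f μ)
    (hint : Integrable (fun ω => log⁺ (f ω)) μ) :
    Integrable (fun ω => log (1 + |f ω|)) μ := by
  refine ((integrable_const (log 2)).add hint).mono'
    (measurable_log.comp_aemeasurable (aemeasurable_const.add hf.abs)).aestronglyMeasurable ?_
  filter_upwards with ω
  rw [norm_of_nonneg (log_nonneg (by linarith [abs_nonneg (f ω)]))]
  exact log_one_add_abs_le (f ω)

theorem Real.tendsto_log_natCast_add_one_div :
    Tendsto (fun n : ℕ => log (n + 1) / n) atTop (𝓝 0) := by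
  have := (tendsto_pow_log_div_mul_add_atTop 1 (-1) 1 one_ne_zero).comp
    (tendsto_atTop_add_const_right _ 1 tendsto_natCast_atTop_atTop)
  simpa [Function.comp_def] using this

theorem tendsto_partialSups_div_natCast {b : ℕ → ℝ}
    (h : Tendsto (fun n : ℕ => b n / n) atTop (𝓝 0)) :
    Tendsto (fun n : ℕ => partialSups b n / n) atTop (𝓝 0) := by
  refine tendsto_order.2 ⟨fun a ha => ?_, fun ε hε => ?_⟩
  · filter_upwards [(tendsto_order.1 h).1 a ha] with n hn
    exact hn.trans_le (div_le_div_of_nonneg_right (le_partialSups b n) n.cast_nonneg)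
  · obtain ⟨N, hN⟩ := eventually_atTop.1 ((tendsto_order.1 h).2 (ε / 2) (half_pos hε))
    have hlarge : ∀ᶠ n : ℕ in atTop, partialSups b N ≤ ε / 2 * n :=
      (tendsto_natCast_atTop_atTop.const_mul_atTop (half_pos hε)).eventually_ge_atTop _
    filter_upwards [hlarge, eventually_gt_atTop 0] with n hNn hn
    have hn' : (0 : ℝ) < n := Nat.cast_pos.2 hn
    have hsup : partialSups b n ≤ ε / 2 * n := by
      refine partialSups_le b n _ fun k hkn => ?_
      rcases le_or_gt k N with hkN | hkN
      · exact (le_partialSups_of_le b hkN).trans hNn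
      · have hk : (0 : ℝ) < k := Nat.cast_pos.2 (N.zero_le.trans_lt hkN)
        have hbk := (div_lt_iff₀ hk).1 (hN k hkN.le)
        nlinarith [(Nat.cast_le (α := ℝ)).2 hkn]
    rw [div_lt_iff₀ hn']
    linarith [mul_pos hε hn']

open Finset in
theorem log_one_add_abs_sum_range_le (x : ℕ → ℝ) (n : ℕ) :
    log (1 + |∑ k ∈ range n, x k|) ≤ log (n + 1) + partialSups (fun k => log (1 + |x k|)) n := by
  set M := partialSups (fun k => log (1 + |x k|)) n
  have hx : ∀ k ≤ n, 1 + |x k| ≤ exp M := fun k hk => by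
    rw [← exp_log (by positivity : 0 < 1 + |x k|)]
    exact exp_le_exp.2 (le_partialSups_of_le (fun k => log (1 + |x k|)) hk)
  have hsum : 1 + |∑ k ∈ range n, x k| ≤ (n + 1) * exp M :=
    calc 1 + |∑ k ∈ range n, x k| ≤ 1 + ∑ k ∈ range n, |x k| := by
          gcongr; exact abs_sum_le_sum_abs _ _
      _ ≤ ∑ k ∈ range (n + 1), (1 + |x k|) := by
          rw [sum_range_succ, sum_add_distrib]
          have : (0 : ℝ) ≤ ∑ k ∈ range n, 1 := sum_nonneg fun _ _ => zero_le_one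
          linarith [abs_nonneg (x n)]
      _ ≤ ∑ k ∈ range (n + 1), exp M :=
          sum_le_sum fun k hk => hx k (Nat.lt_succ_iff.1 (mem_range.1 hk))
      _ = (n + 1) * exp M := by simp
  calc log (1 + |∑ k ∈ range n, x k|) ≤ log ((n + 1) * exp M) := log_le_log (by positivity) hsum
    _ = log (n + 1) + M := by rw [log_mul (by positivity) (exp_pos M).ne', log_exp]

theorem MeasureTheory.MeasurePreserving.ae_eventually_comp_iterate_le_natCast
    {Ω : Type*} [MeasurableSpace Ω] {μ : Measure Ω} [IsProbabilityMeasure μ] {T : Ω → Ω}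
    (hT : MeasurePreserving T μ μ) {g : Ω → ℝ} (hg : Integrable g μ) (hg0 : 0 ≤ g) :
    ∀ᵐ ω ∂μ, ∀ᶠ n : ℕ in atTop, g (T^[n] ω) ≤ n := by
  have hsum : ∑' n : ℕ, μ {ω | g ω ∈ Ioi (n : ℝ)} ≠ ⊤ := by
    let : MeasureSpace Ω := ⟨μ⟩
    exact (ProbabilityTheory.tsum_prob_mem_Ioi_lt_top hg hg0).ne
  have hpres (n : ℕ) : μ {ω | g (T^[n] ω) ∈ Ioi (n : ℝ)} = μ {ω | g ω ∈ Ioi (n : ℝ)} :=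
    (hT.iterate n).measure_preimage (hg.aemeasurable.nullMeasurable measurableSet_Ioi)
  filter_upwards [ae_eventually_notMem (μ := μ) (s := fun n : ℕ => {ω | g (T^[n] ω) ∈ Ioi (n : ℝ)})
    (by rwa [tsum_congr hpres])] with ω hω
  simpa using hω

theorem MeasureTheory.MeasurePreserving.ae_tendsto_comp_iterate_div_natCast
    {Ω : Type*} [MeasurableSpace Ω] {μ : Measure Ω} [IsProbabilityMeasure μ] {T : Ω → Ω}
    (hT : MeasurePreserving T μ μ) {g : Ω → ℝ} (hg : Integrable g μ) :
    ∀ᵐ ω ∂μ, Tendsto (fun n : ℕ => g (T^[n] ω) / n) atTop (𝓝 0) := by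
  have hscaled (m : ℕ) := hT.ae_eventually_comp_iterate_le_natCast (hg.abs.const_mul (m + 1))
    fun ω => by positivity
  filter_upwards [ae_all_iff.2 hscaled] with ω hω
  rw [tendsto_zero_iff_abs_tendsto_zero]
  refine tendsto_order.2 ⟨fun a ha => Eventually.of_forall fun n => ha.trans_le (abs_nonneg _),
    fun ε hε => ?_⟩
  obtain ⟨m, hm⟩ := exists_nat_one_div_lt hε
  filter_upwards [hω m, eventually_gt_atTop 0] with n hn hn0
  have hn0' : (0 : ℝ) < n := Nat.cast_pos.2 hn0
  calc |g (T^[n] ω) / n| = |g (T^[n] ω)| / n := by rw [abs_div, Nat.abs_cast]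
    _ ≤ 1 / (m + 1) := by rw [div_le_div_iff₀ hn0' (by positivity)]; linarith
    _ < ε := hm

theorem log_one_add_birkhoff_general
    {Ω : Type*} [MeasurableSpace Ω]
    (μ : Measure Ω) [IsProbabilityMeasure μ]
    (L : Ω → Ω) (hL : Ergodic L μ)
    (f : Ω → ℝ) (hf : Measurable f)
    (hint : Integrable (fun ω => max (Real.log |f ω|) 0) μ) :
    ∀ᵐ ω ∂μ, Tendsto
      (fun n : ℕ => Real.log (1 + |∑ k ∈ Finset.range n, f (L^[k] ω)|) / n)
      atTop (𝓝 0) := by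
  have hlog : Integrable (fun ω => log (1 + |f ω|)) μ :=
    integrable_log_one_add_abs hf.aemeasurable <| by
      simpa only [posLog_apply, log_abs, max_comm] using hint
  filter_upwards [hL.toMeasurePreserving.ae_tendsto_comp_iterate_div_natCast hlog] with ω hω
  refine squeeze_zero (fun n => div_nonneg (log_nonneg ?_) n.cast_nonneg) (fun n => ?_)
    (by simpa using tendsto_log_natCast_add_one_div.add (tendsto_partialSups_div_natCast hω))
  · linarith [abs_nonneg (∑ k ∈ Finset.range n, f (L^[k] ω))]
  · rw [← add_div]
    gcongr
    exact log_one_add_abs_sum_range_le _ n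

theorem log_one_add_birkhoff
    {Ω : Type*} [MeasurableSpace Ω] [StandardBorelSpace Ω]
    (μ : Measure Ω) [IsProbabilityMeasure μ]
    (L : Ω → Ω) (hL : Ergodic L μ)
    (f : Ω → ℝ) (hf : Measurable f)
    (hint : Integrable (fun ω => max (Real.log |f ω|) 0) μ) :
    ∀ᵐ ω ∂μ, Tendsto
      (fun n : ℕ => Real.log (1 + |∑ k ∈ Finset.range n, f (L^[k] ω)|) / n)
      atTop (𝓝 0) :=
  log_one_add_birkhoff_general μ L hL f hf hint
end
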